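/- For a configuration of four points on the CR sphere S³ given in homogeneous coordinates (with respect to the Hermitian form ⟨z,w⟩ = w̄₃z₁ + w̄₂z₂ + w̄₁z₃) by x₁=(1,0,0), x₂=(0,0,1), x₃=((−1+it)/2, 1, 1), x₄=(|z|²(−1+is)/2, z, 1), with their tangent-line duals f₁=(0,0,1), f₂=(1,0,0), f₃=(1,1,(−1−it)/2), f₄=(1, z̄, −|z|²(1+is)/2), the flag coordinates satisfy z₁₂ = z, z₂₁ = z̄(s+i)/(t+i), and the CR relation z₁₂·z₂₁ = conjugate(z₃₄·z₄₃) holds, where z₃₄ = z[(t+i) − z̄(s+i)]/((z−1)(t−i)) and z₄₃ = z̄(z−1)(s−i)/((t+i)−z̄(s+i)). -/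

import Mathlib

/-- The determinant of three vectors of `K³` w.r.t. the canonical basis. -/
def det3 {K : Type*} [Field K] (a b c : Fin 3 → K) : K :=
  Matrix.det (Matrix.of ![a, b, c])

/-- A generic configuration of (affine) flags `(xᵢ, fᵢ)`: each `fᵢ` vanishes on `xᵢ`,
the points are in general position (any three of the `xᵢ` are linearly independent),
and `f j (x i) ≠ 0` for `i ≠ j`. -/
structure IsGenericConfig {K : Type*} [Field K] {ι : Type*}
    (x : ι → Fin 3 → K) (f : ι → Module.Dual K (Fin 3 → K)) : Prop where
  flag : ∀ i, f i (x i) = 0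
  pos : ∀ i j l, i ≠ j → i ≠ l → j ≠ l → det3 (x i) (x j) (x l) ≠ 0
  nondeg : ∀ i j, i ≠ j → f j (x i) ≠ 0

/-- The edge coordinate `z_ij = f_i(x_k)·det(x_i,x_j,x_l) / (f_i(x_l)·det(x_i,x_j,x_k))`
of a tetrahedron of flags, for `(i,j,k,l)` an even permutation of the four vertices. -/
def zEdge {K : Type*} [Field K] (x : Fin 4 → Fin 3 → K)
    (f : Fin 4 → Module.Dual K (Fin 3 → K)) (i j k l : Fin 4) : K :=
  f i (x k) * det3 (x i) (x j) (x l) / (f i (x l) * det3 (x i) (x j) (x k))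

/-- The triple ratio `z_ijk = f_i(x_j)f_j(x_k)f_k(x_i)/(f_i(x_k)f_j(x_i)f_k(x_j))`. -/
def zFace {K : Type*} [Field K] {ι : Type*} (x : ι → Fin 3 → K)
    (f : ι → Module.Dual K (Fin 3 → K)) (i j k : ι) : K :=
  f i (x j) * f j (x k) * f k (x i) / (f i (x k) * f j (x i) * f k (x j))

/-- The linear form on `ℂ³` with coefficient vector `w`: `v ↦ w₀v₀ + w₁v₁ + w₂v₂`. -/
noncomputable def coeffForm (w : Fin 3 → ℂ) : Module.Dual ℂ (Fin 3 → ℂ) :=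
  w 0 • (LinearMap.proj 0 : (Fin 3 → ℂ) →ₗ[ℂ] ℂ)
    + w 1 • (LinearMap.proj 1 : (Fin 3 → ℂ) →ₗ[ℂ] ℂ)
    + w 2 • (LinearMap.proj 2 : (Fin 3 → ℂ) →ₗ[ℂ] ℂ)

/-! Write `w = z̄`, so that `‖z‖² = w z`. In each edge coordinate the numerator
`f_i(x_k) det(x_i,x_j,x_l)` and the denominator `f_i(x_l) det(x_i,x_j,x_k)` are polynomials
in `z, w, s, t, i` sharing an explicit factor (`-1`, `iz/2`, `i/2`, `-iz/2`); cancelling it gives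
the closed forms. Then `z₃₄ z₄₃ = z w (s - i)/(t - i)`, the conjugate of
`z₁₂ z₂₁ = z w (s + i)/(t + i)`. -/

open Complex ComplexConjugate

lemma coeffForm_apply (w v : Fin 3 → ℂ) : coeffForm w v = w 0 * v 0 + w 1 * v 1 + w 2 * v 2 := by
  simp [coeffForm]

lemma zEdge_eq_div_of_common_factor {K : Type*} [Field K] {x : Fin 4 → Fin 3 → K}
    {f : Fin 4 → Module.Dual K (Fin 3 → K)} {i j k l : Fin 4} {c n d : K} (hc : c ≠ 0)
    (hn : f i (x k) * det3 (x i) (x j) (x l) = c * n)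
    (hd : f i (x l) * det3 (x i) (x j) (x k) = c * d) :
    zEdge x f i j k l = n / d := by
  rw [zEdge, hn, hd, mul_div_mul_left _ _ hc]

noncomputable def crTetraPoints (z : ℂ) (s t : ℝ) : Fin 4 → Fin 3 → ℂ :=
  ![![1, 0, 0], ![0, 0, 1],
    ![(-1 + I * t) / 2, 1, 1],
    ![(‖z‖ : ℂ) ^ 2 * (-1 + I * s) / 2, z, 1]]

/-- `crTetraDuals z s t i = ⟨·, crTetraPoints z s t i⟩` for the Hermitian form `J`. -/
noncomputable def crTetraDuals (z : ℂ) (s t : ℝ) : Fin 4 → Module.Dual ℂ (Fin 3 → ℂ) :=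
  ![coeffForm ![0, 0, 1], coeffForm ![1, 0, 0],
    coeffForm ![1, 1, (-1 - I * t) / 2],
    coeffForm ![1, conj z, -(‖z‖ : ℂ) ^ 2 * (1 + I * s) / 2]]

section
variable (z : ℂ) (s t : ℝ)

lemma zEdge_crTetra_0123 : zEdge (crTetraPoints z s t) (crTetraDuals z s t) 0 1 2 3 = z := by
  refine (zEdge_eq_div_of_common_factor (c := -1) (d := 1) (by norm_num) ?_ ?_).trans (div_one z)
  all_goals simp only [crTetraPoints, crTetraDuals, coeffForm_apply, det3, Matrix.det_fin_three,
    Matrix.of_apply, Matrix.cons_val', Matrix.cons_val, Matrix.cons_val_fin_one]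
  all_goals ring

lemma zEdge_crTetra_1032 (hz : z ≠ 0) :
    zEdge (crTetraPoints z s t) (crTetraDuals z s t) 1 0 3 2 = conj z * (s + I) / (t + I) := by
  refine zEdge_eq_div_of_common_factor (c := I * z / 2) (by simp [hz]) ?_ ?_
  all_goals simp only [crTetraPoints, crTetraDuals, coeffForm_apply, det3, Matrix.det_fin_three,
    Matrix.of_apply, Matrix.cons_val', Matrix.cons_val, Matrix.cons_val_fin_one, ← conj_mul']
  · linear_combination (-conj z * z / 2) * I_sq
  · linear_combination (-z / 2) * I_sq

lemma zEdge_crTetra_2301 :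
    zEdge (crTetraPoints z s t) (crTetraDuals z s t) 2 3 0 1
      = z * ((t + I) - conj z * (s + I)) / ((z - 1) * (t - I)) := by
  refine zEdge_eq_div_of_common_factor (c := I / 2) (by simp) ?_ ?_
  all_goals simp only [crTetraPoints, crTetraDuals, coeffForm_apply, det3, Matrix.det_fin_three,
    Matrix.of_apply, Matrix.cons_val', Matrix.cons_val, Matrix.cons_val_fin_one, ← conj_mul']
  · linear_combination (z * (conj z - 1) / 2) * I_sq
  · linear_combination ((z - 1) / 2) * I_sq

lemma zEdge_crTetra_3210 (hz : z ≠ 0) :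
    zEdge (crTetraPoints z s t) (crTetraDuals z s t) 3 2 1 0
      = conj z * (z - 1) * (s - I) / ((t + I) - conj z * (s + I)) := by
  refine zEdge_eq_div_of_common_factor (c := -I * z / 2) (by simp [hz]) ?_ ?_
  all_goals simp only [crTetraPoints, crTetraDuals, coeffForm_apply, det3, Matrix.det_fin_three,
    Matrix.of_apply, Matrix.cons_val', Matrix.cons_val, Matrix.cons_val_fin_one, ← conj_mul']
  · linear_combination (conj z * z * (1 - z) / 2) * I_sq
  · linear_combination (z * (1 - conj z) / 2) * I_sq

lemma zEdge_crTetra_2301_mul_3210 (hz0 : z ≠ 0) (hz1 : z ≠ 1)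
    (hden : (t + I) - conj z * (s + I) ≠ 0) :
    zEdge (crTetraPoints z s t) (crTetraDuals z s t) 2 3 0 1
        * zEdge (crTetraPoints z s t) (crTetraDuals z s t) 3 2 1 0
      = z * conj z * (s - I) / (t - I) := by
  have ht : (t : ℂ) - I ≠ 0 := fun h ↦ by simpa using congrArg im h
  have hz1' : z - 1 ≠ 0 := sub_ne_zero.mpr hz1
  rw [zEdge_crTetra_2301, zEdge_crTetra_3210 z s t hz0]
  field_simp

lemma zEdge_crTetra_cr_relation (hz0 : z ≠ 0) (hz1 : z ≠ 1)
    (hden : (t + I) - conj z * (s + I) ≠ 0) :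
    zEdge (crTetraPoints z s t) (crTetraDuals z s t) 0 1 2 3
        * zEdge (crTetraPoints z s t) (crTetraDuals z s t) 1 0 3 2
      = conj (zEdge (crTetraPoints z s t) (crTetraDuals z s t) 2 3 0 1
          * zEdge (crTetraPoints z s t) (crTetraDuals z s t) 3 2 1 0) := by
  rw [zEdge_crTetra_2301_mul_3210 z s t hz0 hz1 hden, zEdge_crTetra_0123,
    zEdge_crTetra_1032 z s t hz0]
  simp only [map_div₀, map_mul, map_sub, conj_conj, conj_ofReal, conj_I, sub_neg_eq_add]
  ring

end

theorem cr_tetrahedron_coords_general (z : ℂ) (s t : ℝ)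
    (hz0 : z ≠ 0) (hz1 : z ≠ 1)
    (hden : ((t : ℂ) + Complex.I) - starRingEnd ℂ z * ((s : ℂ) + Complex.I) ≠ 0) :
    let x : Fin 4 → Fin 3 → ℂ :=
      ![![1, 0, 0], ![0, 0, 1],
        ![(-1 + Complex.I * (t : ℂ)) / 2, 1, 1],
        ![((‖z‖ : ℂ))^2 * (-1 + Complex.I * (s : ℂ)) / 2, z, 1]]
    let f : Fin 4 → Module.Dual ℂ (Fin 3 → ℂ) :=
      ![coeffForm ![0, 0, 1], coeffForm ![1, 0, 0],
        coeffForm ![1, 1, (-1 - Complex.I * (t : ℂ)) / 2],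
        coeffForm ![1, starRingEnd ℂ z,
          -((‖z‖ : ℂ))^2 * (1 + Complex.I * (s : ℂ)) / 2]]
    zEdge x f 0 1 2 3 = z ∧
    zEdge x f 1 0 3 2 = starRingEnd ℂ z * ((s : ℂ) + Complex.I) / ((t : ℂ) + Complex.I) ∧
    zEdge x f 2 3 0 1
      = z * (((t : ℂ) + Complex.I) - starRingEnd ℂ z * ((s : ℂ) + Complex.I))
          / ((z - 1) * ((t : ℂ) - Complex.I)) ∧
    zEdge x f 3 2 1 0
      = starRingEnd ℂ z * (z - 1) * ((s : ℂ) - Complex.I)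
          / (((t : ℂ) + Complex.I) - starRingEnd ℂ z * ((s : ℂ) + Complex.I)) ∧
    zEdge x f 0 1 2 3 * zEdge x f 1 0 3 2
      = starRingEnd ℂ (zEdge x f 2 3 0 1 * zEdge x f 3 2 1 0) := by
  intro x f
  exact ⟨zEdge_crTetra_0123 z s t, zEdge_crTetra_1032 z s t hz0, zEdge_crTetra_2301 z s t,
    zEdge_crTetra_3210 z s t hz0, zEdge_crTetra_cr_relation z s t hz0 hz1 hden⟩

/-- For the standard configuration of four points on the CR sphere `S³` with their
tangent-line duals, the flag coordinates satisfy `z₁₂ = z`, `z₂₁ = z̄(s+i)/(t+i)`, the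
stated formulas for `z₃₄`, `z₄₃`, and the CR relation `z₁₂·z₂₁ = conj(z₃₄·z₄₃)`. -/
theorem cr_tetrahedron_coords (z : ℂ) (s t : ℝ)
    (hz0 : z ≠ 0) (hz1 : z ≠ 1)
    (hgen : starRingEnd ℂ z * ((s : ℂ) + Complex.I) / ((t : ℂ) + Complex.I) ≠ 1)
    (hden : ((t : ℂ) + Complex.I) - starRingEnd ℂ z * ((s : ℂ) + Complex.I) ≠ 0) :
    let x : Fin 4 → Fin 3 → ℂ :=
      ![![1, 0, 0], ![0, 0, 1],
        ![(-1 + Complex.I * (t : ℂ)) / 2, 1, 1],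
        ![((‖z‖ : ℂ))^2 * (-1 + Complex.I * (s : ℂ)) / 2, z, 1]]
    let f : Fin 4 → Module.Dual ℂ (Fin 3 → ℂ) :=
      ![coeffForm ![0, 0, 1], coeffForm ![1, 0, 0],
        coeffForm ![1, 1, (-1 - Complex.I * (t : ℂ)) / 2],
        coeffForm ![1, starRingEnd ℂ z,
          -((‖z‖ : ℂ))^2 * (1 + Complex.I * (s : ℂ)) / 2]]
    zEdge x f 0 1 2 3 = z ∧
    zEdge x f 1 0 3 2 = starRingEnd ℂ z * ((s : ℂ) + Complex.I) / ((t : ℂ) + Complex.I) ∧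
    zEdge x f 2 3 0 1
      = z * (((t : ℂ) + Complex.I) - starRingEnd ℂ z * ((s : ℂ) + Complex.I))
          / ((z - 1) * ((t : ℂ) - Complex.I)) ∧
    zEdge x f 3 2 1 0
      = starRingEnd ℂ z * (z - 1) * ((s : ℂ) - Complex.I)
          / (((t : ℂ) + Complex.I) - starRingEnd ℂ z * ((s : ℂ) + Complex.I)) ∧
    zEdge x f 0 1 2 3 * zEdge x f 1 0 3 2
      = starRingEnd ℂ (zEdge x f 2 3 0 1 * zEdge x f 3 2 1 0) :=
  cr_tetrahedron_coords_general z s t hz0 hz1 hden
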